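/- Let k ≥ 1 and n = 2k + 1. If c is a radio labeling of C_n □ C_n, then for any three vertices u, v, w of C_n □ C_n with c(u) < c(v) < c(w), one has c(w) − c(u) ≥ k + 1. -/

import Mathlib

/-!
Sum the radio condition over the three pairs among `u, v, w`: the label differences add up to
`2 (c w - c u)`, while the three distances add up to at most `2n`, since in each cycle factor the
three pairwise distances of any three points add up to at most the length `n` of the cycle. As
`diam (C_n □ C_n) ≥ 2k`, this gives `3 (2k + 1) ≤ 2 (2k + 1) + 2 (c w - c u)`.
-/

open SimpleGraph

/-- `c` is a radio labeling of `G`: labels are positive integers and for every two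
distinct vertices `u, v` we have `d(u,v) + |c(u) - c(v)| ≥ 1 + diam(G)`. -/
def IsRadioLabeling {V : Type*} (G : SimpleGraph V) (c : V → ℕ) : Prop :=
  (∀ v, 1 ≤ c v) ∧
    ∀ u v : V, u ≠ v → G.diam + 1 ≤ G.dist u v + Nat.dist (c u) (c v)

/-- The span of a labeling: the maximum label used. -/
def labelSpan {V : Type*} [Fintype V] (c : V → ℕ) : ℕ := Finset.univ.sup c

/-- The radio number of `G`: the minimum span over all radio labelings. -/
noncomputable def radioNumber {V : Type*} [Fintype V] (G : SimpleGraph V) : ℕ :=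
  sInf {s | ∃ c : V → ℕ, IsRadioLabeling G c ∧ labelSpan c = s}

lemma Fin.val_sub_eq_ite {n : ℕ} (a b : Fin n) :
    (a - b).val = if b.val ≤ a.val then a.val - b.val else n + a.val - b.val := by
  split_ifs with h
  · exact Fin.coe_sub_iff_le.mpr h
  · exact Fin.coe_sub_iff_lt.mpr (not_le.mp h)

lemma IsRadioLabeling.three_mul_diam_add_one_le {V : Type*} {G : SimpleGraph V} {c : V → ℕ}
    (hc : IsRadioLabeling G c) {u v w : V} (huv : c u < c v) (hvw : c v < c w) :
    3 * (G.diam + 1) ≤ G.dist u v + G.dist v w + G.dist u w + 2 * (c w - c u) := by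
  have ruv := hc.2 u v (fun h => by subst h; omega)
  have rvw := hc.2 v w (fun h => by subst h; omega)
  have ruw := hc.2 u w (fun h => by subst h; omega)
  rw [Nat.dist_eq_sub_of_le huv.le] at ruv
  rw [Nat.dist_eq_sub_of_le hvw.le] at rvw
  rw [Nat.dist_eq_sub_of_le (huv.trans hvw).le] at ruw
  omega

namespace SimpleGraph

lemma Reachable.dist_boxProd {α β : Type*} {G : SimpleGraph α} {H : SimpleGraph β}
    {x y : α × β} (h₁ : G.Reachable x.1 y.1) (h₂ : H.Reachable x.2 y.2) :
    (G □ H).dist x y = G.dist x.1 y.1 + H.dist x.2 y.2 := by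
  simp only [dist, edist_boxProd]
  exact ENat.toNat_add (edist_ne_top_iff_reachable.mpr h₁) (edist_ne_top_iff_reachable.mpr h₂)

section cycleGraph

variable {n : ℕ}

lemma cycleGraph_min_val_sub_le_length {x y : Fin n} (p : (cycleGraph n).Walk x y) :
    min (x - y).val (y - x).val ≤ p.length := by
  induction p with
  | nil => simp [Fin.val_sub_eq_ite]
  | @cons a b r h _ ih =>
    have hadj := cycleGraph_adj'.mp h
    have := a.isLt; have := b.isLt; have := r.isLt
    rw [Walk.length_cons]
    simp only [Fin.val_sub_eq_ite] at hadj ih ⊢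
    split_ifs at hadj ih ⊢ <;> omega

lemma cycleGraph_dist_le_val_sub (x y : Fin (n + 1)) :
    (cycleGraph (n + 1)).dist x y ≤ (y - x).val := by
  induction hm : (y - x).val generalizing x with
  | zero => simp [(sub_eq_zero.mp (Fin.ext hm)).symm]
  | succ m ih =>
    have hn : 0 < n := by have := (y - x).isLt; omega
    have hone : (1 : Fin (n + 1)).val = 1 := by simp [hn]
    have hadj : (cycleGraph (n + 1)).Adj x (x + 1) :=
      cycleGraph_adj'.mpr (Or.inr (by rw [add_sub_cancel_left, hone]))
    have hrest : (y - (x + 1)).val = m := by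
      rw [sub_add_eq_sub_sub, Fin.val_sub_eq_ite, hone, if_pos (by omega)]
      omega
    calc (cycleGraph (n + 1)).dist x y
        ≤ (cycleGraph (n + 1)).dist x (x + 1) + (cycleGraph (n + 1)).dist (x + 1) y :=
          cycleGraph_connected.dist_triangle
      _ ≤ 1 + m := by rw [dist_eq_one_iff_adj.mpr hadj]; exact Nat.add_le_add_left (ih _ hrest) 1
      _ = m + 1 := Nat.add_comm 1 m

lemma cycleGraph_dist (x y : Fin (n + 1)) :
    (cycleGraph (n + 1)).dist x y = min (x - y).val (y - x).val := by
  refine le_antisymm (le_min ?_ (cycleGraph_dist_le_val_sub x y)) ?_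
  · rw [dist_comm]; exact cycleGraph_dist_le_val_sub y x
  · obtain ⟨p, hp⟩ := cycleGraph_connected.exists_walk_length_eq_dist x y
    exact hp ▸ cycleGraph_min_val_sub_le_length p

lemma cycleGraph_dist_add_dist_add_dist_le (x y z : Fin (n + 1)) :
    (cycleGraph (n + 1)).dist x y + (cycleGraph (n + 1)).dist y z
      + (cycleGraph (n + 1)).dist x z ≤ n + 1 := by
  have := x.isLt; have := y.isLt; have := z.isLt
  simp only [cycleGraph_dist, Fin.val_sub_eq_ite]
  split_ifs <;> omega

lemma cycleGraph_boxProd_dist_add_dist_add_dist_le (u v w : Fin (n + 1) × Fin (n + 1)) :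
    (cycleGraph (n + 1) □ cycleGraph (n + 1)).dist u v
      + (cycleGraph (n + 1) □ cycleGraph (n + 1)).dist v w
      + (cycleGraph (n + 1) □ cycleGraph (n + 1)).dist u w ≤ 2 * (n + 1) := by
  simp only [Reachable.dist_boxProd (cycleGraph_connected.preconnected _ _)
    (cycleGraph_connected.preconnected _ _)]
  have := cycleGraph_dist_add_dist_add_dist_le u.1 v.1 w.1
  have := cycleGraph_dist_add_dist_add_dist_le u.2 v.2 w.2
  omega

lemma two_mul_le_diam_cycleGraph_boxProd (k : ℕ) :
    2 * k ≤ (cycleGraph (2 * k + 1) □ cycleGraph (2 * k + 1)).diam := by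
  have hfin : (cycleGraph (2 * k + 1) □ cycleGraph (2 * k + 1)).ediam ≠ ⊤ :=
    connected_iff_ediam_ne_top.mp (cycleGraph_connected.boxProd cycleGraph_connected)
  let a : Fin (2 * k + 1) := ⟨k, by omega⟩
  have hdist : (cycleGraph (2 * k + 1)).dist 0 a = k := by
    have ha : a.val = k := rfl
    rw [cycleGraph_dist, Fin.val_sub_eq_ite, Fin.val_sub_eq_ite, Fin.val_zero, ha]
    split_ifs <;> omega
  calc 2 * k = (cycleGraph (2 * k + 1) □ cycleGraph (2 * k + 1)).dist (0, 0) (a, a) := by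
        rw [Reachable.dist_boxProd (cycleGraph_connected.preconnected _ _)
          (cycleGraph_connected.preconnected _ _)]
        simp only [hdist]; ring
    _ ≤ _ := dist_le_diam hfin

end cycleGraph

end SimpleGraph

theorem gap_every_other_label_odd_general (n k : ℕ) (hn : n = 2 * k + 1)
    (c : Fin n × Fin n → ℕ) (hc : IsRadioLabeling (cycleGraph n □ cycleGraph n) c)
    (u v w : Fin n × Fin n) (huv : c u < c v) (hvw : c v < c w) :
    k + 1 ≤ c w - c u := by
  subst hn
  have hradio := hc.three_mul_diam_add_one_le huv hvw
  have hperimeter := cycleGraph_boxProd_dist_add_dist_add_dist_le u v w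
  have hdiam := two_mul_le_diam_cycleGraph_boxProd k
  omega

/-- for `n = 2k + 1`, `k ≥ 1`, any radio labeling `c` of `C_n □ C_n` and vertices
`u, v, w` with `c u < c v < c w` satisfy `c w - c u ≥ k + 1`. -/
theorem gap_every_other_label_odd (n k : ℕ) (hk : 1 ≤ k) (hn : n = 2 * k + 1)
    (c : Fin n × Fin n → ℕ) (hc : IsRadioLabeling (cycleGraph n □ cycleGraph n) c)
    (u v w : Fin n × Fin n) (huv : c u < c v) (hvw : c v < c w) :
    k + 1 ≤ c w - c u :=
  gap_every_other_label_odd_general n k hn c hc u v w huv hvw
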